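/- For a nonempty open bounded convex set Ω ⊂ R^d, d≥2: P(Ω) ≥ (ω_d / (2 d^{d-1})) · diam(Ω) · ρ(Ω)^{d-2}, where ρ is the inradius and ω_d the volume of the unit ball. (Proved via John's ellipsoid: if E(a) ⊂ Ω ⊂ E(da) with semi-axes a_1 ≥ ... ≥ a_d, then P(Ω) ≥ ω_d a_1 a_d^{d-2}.) -/

import Mathlib

open MeasureTheory Metric Set Bornology Pointwise

noncomputable def pCap (d : ℕ) (p : ℝ) (K : Set (EuclideanSpace ℝ (Fin d))) : ℝ :=
  sInf { c : ℝ | ∃ u : EuclideanSpace ℝ (Fin d) → ℝ,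
    Continuous u ∧ Differentiable ℝ u ∧
    (∀ x ∈ K, 1 ≤ u x) ∧
    (∀ ε > 0, volume {x | ε < u x} < ⊤) ∧
    c = ∫ x, ‖fderiv ℝ u x‖ ^ p }

noncomputable def torsion (d : ℕ) (q : ℝ) (Ω : Set (EuclideanSpace ℝ (Fin d))) : ℝ :=
  (sSup { c : ℝ | ∃ ψ : EuclideanSpace ℝ (Fin d) → ℝ,
    Continuous ψ ∧ Differentiable ℝ ψ ∧ tsupport ψ ⊆ Ω ∧ ψ ≠ 0 ∧
    c = (∫ x in Ω, |ψ x|) ^ q / ∫ x in Ω, ‖fderiv ℝ ψ x‖ ^ q }) ^ (1 / (q - 1))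

noncomputable def perim (d : ℕ) (A : Set (EuclideanSpace ℝ (Fin d))) : ℝ :=
  (μH[(d : ℝ) - 1] (frontier A)).toReal

noncomputable def inradius (d : ℕ) (Ω : Set (EuclideanSpace ℝ (Fin d))) : ℝ :=
  sSup { r : ℝ | ∃ x, ball x r ⊆ Ω }

/-!
Fix a ball `ball x₀ r ⊆ Ω` and points `p, q ∈ Ω`. Rotate so that `p - q` points along `e₁` and
project along `e₀` onto the remaining `d - 1` coordinates, with the sup norm. The projection is
1-Lipschitz, `μH[d-1]` is Lebesgue measure on the target, and every line in direction `e₀`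
through a point of `Ω` meets `∂Ω`; so `μH[d-1] (∂Ω)` bounds the volume of the projected convex
body. That body contains a Euclidean `r`-ball and a segment of length `‖p - q‖` along the first
axis, hence the cylinder `(1 - s) • (slice of the ball) + s • (segment)`, of volume
`s ‖p - q‖ ((1 - s) r) ^ (d - 2) ω_(d-2)`. Since `ω_d = 2π ω_(d-2) / d`, a suitable `s` beats
the stated constant; then let `r ↑ ρ(Ω)` and take the supremum over `p, q`.

As `perim` is the `toReal` of `μH[d-1] (∂Ω)`, its finiteness is needed too: the nearest-point
retraction onto `closure Ω` is 1-Lipschitz and, following outer normals, maps the boundary of a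
large cube onto `∂Ω`.
-/

open scoped InnerProductSpace

theorem image_subset_image_frontier {X Y : Type*} [NormedAddCommGroup X] [NormedSpace ℝ X]
    {U : Set X} (hU : IsBounded U) {f : X → Y} {v : X} (hv : v ≠ 0)
    (hf : ∀ x (t : ℝ), f (x + t • v) = f x) : f '' U ⊆ f '' frontier U := by
  rintro _ ⟨x, hx, rfl⟩
  set g : ℝ → X := fun t => x + t • v
  have hg : AntilipschitzWith ‖v‖₊⁻¹ g := AntilipschitzWith.of_le_mul_dist fun t t' => by
    rw [dist_add_left, dist_eq_norm (t • v), ← sub_smul, norm_smul, ← dist_eq_norm, NNReal.coe_inv,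
      coe_nnnorm, mul_comm (dist t t'), inv_mul_cancel_left₀ (norm_ne_zero_iff.2 hv)]
  obtain ⟨t, ht⟩ : (frontier (g ⁻¹' U)).Nonempty := by
    refine nonempty_frontier_iff.2 ⟨⟨0, by simpa [g] using hx⟩, fun huniv => ?_⟩
    exact not_bddAbove_univ (huniv ▸ hg.isBounded_preimage hU).bddAbove
  exact ⟨g t, (by fun_prop : Continuous g).frontier_preimage_subset U ht, hf x t⟩

theorem volume_image_le_hausdorffMeasure {X : Type*} [EMetricSpace X] [MeasurableSpace X]
    [BorelSpace X] {k : ℕ} {f : X → Fin k → ℝ} (hf : LipschitzWith 1 f) (s : Set X) :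
    volume (f '' s) ≤ μH[k] s := by
  have h := hausdorffMeasure_pi_real (ι := Fin k)
  rw [Fintype.card_fin] at h
  simpa [← h] using hf.hausdorffMeasure_image_le k.cast_nonneg s

def axisCylinder {n : ℕ} (I : Set ℝ) (B : Set (EuclideanSpace ℝ (Fin n))) :
    Set (Fin (n + 1) → ℝ) :=
  {x | x 0 ∈ I ∧ WithLp.toLp 2 (Fin.tail x) ∈ B}

theorem volume_axisCylinder {n : ℕ} {I : Set ℝ} {B : Set (EuclideanSpace ℝ (Fin n))}
    (hI : MeasurableSet I) (hB : MeasurableSet B) :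
    volume (axisCylinder I B) = volume I * volume B := by
  have hB' : MeasurableSet (WithLp.toLp 2 ⁻¹' B : Set (Fin n → ℝ)) :=
    (PiLp.volume_preserving_toLp (Fin n)).measurable hB
  have h : axisCylinder I B =
      MeasurableEquiv.piFinSuccAbove (fun _ => ℝ) 0 ⁻¹' (I ×ˢ (WithLp.toLp 2 ⁻¹' B)) := rfl
  rw [h, (volume_preserving_piFinSuccAbove (fun _ => ℝ) 0).measure_preimage
      (hI.prod hB').nullMeasurableSet, Measure.volume_eq_prod, Measure.prod_prod,
    (PiLp.volume_preserving_toLp (Fin n)).measure_preimage hB.nullMeasurableSet]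

theorem norm_toLp_eq_norm_toLp_tail {n : ℕ} {v : Fin (n + 1) → ℝ} (hv : v 0 = 0) :
    ‖WithLp.toLp 2 v‖ = ‖WithLp.toLp 2 (Fin.tail v)‖ := by
  simp [EuclideanSpace.norm_eq, Fin.sum_univ_succ, hv, Fin.tail]

theorem Convex.axisCylinder_subset {n : ℕ} {C : Set (Fin (n + 1) → ℝ)} (hC : Convex ℝ C)
    {b c : Fin (n + 1) → ℝ} {D r s : ℝ} (hb : b ∈ C) (hbD : b + Pi.single 0 D ∈ C)
    (hball : WithLp.toLp 2 ⁻¹' ball (WithLp.toLp 2 c) r ⊆ C) (hs0 : 0 ≤ s) (hs1 : s < 1) :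
    axisCylinder (Ioo ((1 - s) * c 0 + s * b 0) ((1 - s) * c 0 + s * b 0 + s * D))
      (ball (WithLp.toLp 2 ((1 - s) • Fin.tail c + s • Fin.tail b)) ((1 - s) * r)) ⊆ C := by
  rintro x ⟨⟨hx₁, hx₂⟩, hx⟩
  set τ := (x 0 - ((1 - s) * c 0 + s * b 0)) / (s * D)
  have hsD : 0 < s * D := by linarith
  have hτ : τ * (s * D) = x 0 - ((1 - s) * c 0 + s * b 0) := div_mul_cancel₀ _ hsD.ne'
  have hτ0 : 0 ≤ τ := div_nonneg (by linarith) hsD.le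
  have hτ1 : τ ≤ 1 := (div_le_one hsD).2 (by linarith)
  -- `x = (1 - s) • x' + s • y` with `y` on the segment and `x'` in the ball.
  set y := b + τ • Pi.single 0 D
  have hy : y ∈ C := by
    convert hC hb hbD (sub_nonneg.2 hτ1) hτ0 (by ring) using 1
    module
  set x' := (1 - s)⁻¹ • (x - s • y)
  have hs : 0 < 1 - s := by linarith
  have hx' : x' ∈ C := by
    apply hball
    have hdiff : x' - c = (1 - s)⁻¹ • (x - s • y - (1 - s) • c) := by
      simp only [x', smul_sub, smul_smul, inv_mul_cancel₀ hs.ne', one_smul]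
    have h0 : (x - s • y - (1 - s) • c) 0 = 0 := by
      simp only [y, Pi.sub_apply, Pi.add_apply, Pi.smul_apply, smul_eq_mul, Pi.single_eq_same]
      linarith
    have htail : Fin.tail (x - s • y - (1 - s) • c) =
        Fin.tail x - ((1 - s) • Fin.tail c + s • Fin.tail b) := by
      ext j
      simp only [y, Fin.tail, Pi.sub_apply, Pi.add_apply, Pi.smul_apply, smul_eq_mul,
        Pi.single_eq_of_ne (Fin.succ_ne_zero _)]
      ring
    rw [mem_preimage, mem_ball, dist_eq_norm, ← WithLp.toLp_sub, hdiff, WithLp.toLp_smul,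
      norm_smul, norm_toLp_eq_norm_toLp_tail h0, Real.norm_of_nonneg (inv_nonneg.2 hs.le),
      inv_mul_lt_iff₀ hs, htail, WithLp.toLp_sub, ← dist_eq_norm]
    exact hx
  convert hC hx' hy hs.le hs0 (by ring) using 1
  simp only [x', smul_smul, mul_inv_cancel₀ hs.ne', one_smul, sub_add_cancel]

theorem Convex.ofReal_mul_volume_unitBall_le_volume {n : ℕ} {C : Set (Fin (n + 1) → ℝ)}
    (hC : Convex ℝ C) {b c : Fin (n + 1) → ℝ} {D r s : ℝ} (hb : b ∈ C)
    (hbD : b + Pi.single 0 D ∈ C) (hr : 0 < r)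
    (hball : WithLp.toLp 2 ⁻¹' ball (WithLp.toLp 2 c) r ⊆ C) (hs0 : 0 ≤ s) (hs1 : s < 1) :
    ENNReal.ofReal (s * D * ((1 - s) * r) ^ n) * volume (ball (0 : EuclideanSpace ℝ (Fin n)) 1)
      ≤ volume C := by
  have hsr : 0 < (1 - s) * r := mul_pos (by linarith) hr
  calc _ = volume (Ioo ((1 - s) * c 0 + s * b 0) ((1 - s) * c 0 + s * b 0 + s * D)) *
        volume (ball (WithLp.toLp 2 ((1 - s) • Fin.tail c + s • Fin.tail b)) ((1 - s) * r)) := by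
        rw [Real.volume_Ioo, Measure.addHaar_ball_of_pos _ _ hsr, finrank_euclideanSpace_fin,
          ← mul_assoc, ← ENNReal.ofReal_mul' (by positivity), add_sub_cancel_left]
    _ = volume (axisCylinder _ _) := (volume_axisCylinder measurableSet_Ioo measurableSet_ball).symm
    _ ≤ volume C := measure_mono (hC.axisCylinder_subset hb hbD hball hs0 hs1)

noncomputable def euclideanTail (n : ℕ) : EuclideanSpace ℝ (Fin (n + 1)) →ₗ[ℝ] Fin n → ℝ :=
  LinearMap.funLeft ℝ ℝ Fin.succ ∘ₗ (WithLp.linearEquiv 2 ℝ (Fin (n + 1) → ℝ)).toLinearMap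

theorem euclideanTail_apply {n : ℕ} (y : EuclideanSpace ℝ (Fin (n + 1))) :
    euclideanTail n y = Fin.tail (WithLp.ofLp y) := rfl

theorem lipschitzWith_euclideanTail (n : ℕ) : LipschitzWith 1 (euclideanTail n) :=
  LipschitzWith.of_dist_le_mul fun y y' => by
    rw [NNReal.coe_one, one_mul]
    exact dist_pi_le_iff dist_nonneg |>.2 fun j => PiLp.dist_apply_le y y' j.succ

theorem preimage_ball_subset_image_euclideanTail {n : ℕ} (y : EuclideanSpace ℝ (Fin (n + 1)))
    (r : ℝ) : WithLp.toLp 2 ⁻¹' ball (WithLp.toLp 2 (euclideanTail n y)) r ⊆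
      euclideanTail n '' ball y r := by
  intro w hw
  refine ⟨WithLp.toLp 2 (Fin.cons (y 0) w), ?_, by simp [euclideanTail_apply]⟩
  rw [mem_preimage, mem_ball, EuclideanSpace.dist_eq] at hw
  rw [mem_ball, EuclideanSpace.dist_eq, Fin.sum_univ_succ]
  simpa [euclideanTail_apply, Fin.tail] using hw

theorem ofReal_le_hausdorffMeasure_frontier {n : ℕ} {Ω : Set (EuclideanSpace ℝ (Fin (n + 2)))}
    (hbdd : IsBounded Ω) (hconv : Convex ℝ Ω) {x₀ : EuclideanSpace ℝ (Fin (n + 2))} {r : ℝ}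
    (hr : 0 < r) (hball : ball x₀ r ⊆ Ω) {p q : EuclideanSpace ℝ (Fin (n + 2))} (hp : p ∈ Ω)
    (hq : q ∈ Ω) {s : ℝ} (hs0 : 0 ≤ s) (hs1 : s < 1) :
    ENNReal.ofReal (s * dist p q * ((1 - s) * r) ^ n) *
      volume (ball (0 : EuclideanSpace ℝ (Fin n)) 1) ≤ μH[(n + 1 : ℕ)] (frontier Ω) := by
  obtain ⟨T, hT⟩ : ∃ T : EuclideanSpace ℝ (Fin (n + 2)) ≃ₗᵢ[ℝ] EuclideanSpace ℝ (Fin (n + 2)),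
      T (p - q) = EuclideanSpace.single 1 (dist p q) :=
    ⟨Submodule.reflection _, Submodule.reflection_sub (by simp [dist_eq_norm])⟩
  set F := euclideanTail (n + 1) ∘ₗ T.toLinearMap
  have hFlip : LipschitzWith 1 F := by
    have h := (lipschitzWith_euclideanTail (n + 1)).comp T.lipschitz
    rw [mul_one] at h
    exact h
  have hFv : ∀ x (t : ℝ), F (x + t • T.symm (EuclideanSpace.single 0 1)) = F x := by
    intro x t
    ext j
    simp [F, euclideanTail_apply, Fin.tail, Fin.succ_ne_zero]
  have hvol : volume (F '' Ω) ≤ μH[(n + 1 : ℕ)] (frontier Ω) :=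
    (measure_mono (image_subset_image_frontier hbdd (by simp) hFv)).trans
      (volume_image_le_hausdorffMeasure hFlip _)
  have hFpq : F q + Pi.single 0 (dist p q) = F p := by
    rw [eq_comm, ← sub_eq_iff_eq_add', ← map_sub]
    ext j
    cases j using Fin.cases <;> simp [F, hT, euclideanTail_apply, Fin.tail, Fin.succ_succ_ne_one]
  refine le_trans ?_ hvol
  refine (hconv.linear_image F).ofReal_mul_volume_unitBall_le_volume (c := F x₀)
    (mem_image_of_mem F hq) (hFpq ▸ mem_image_of_mem F hp) hr ?_ hs0 hs1
  calc _ ⊆ euclideanTail _ '' ball (T x₀) r := preimage_ball_subset_image_euclideanTail _ r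
    _ = F '' ball x₀ r := by rw [← T.image_ball, image_image]; rfl
    _ ⊆ F '' Ω := image_mono hball

section NearestPoint

variable {F : Type*} [NormedAddCommGroup F] [InnerProductSpace ℝ F]

theorem norm_sub_sq_le_inner_of_forall_inner_le_zero {K : Set F} {u u' v v' : F}
    (hv : v ∈ K) (hv' : v' ∈ K) (h : ∀ y ∈ K, ⟪u - v, y - v⟫_ℝ ≤ 0)
    (h' : ∀ y ∈ K, ⟪u' - v', y - v'⟫_ℝ ≤ 0) : ‖v - v'‖ ^ 2 ≤ ⟪u - u', v - v'⟫_ℝ := by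
  have e₁ := h v' hv'
  have e₂ := h' v hv
  rw [← neg_sub v v', inner_neg_right] at e₁
  have hsplit : u - u' = (v - v') + (u - v) - (u' - v') := by abel
  rw [hsplit, inner_sub_left, inner_add_left, real_inner_self_eq_norm_sq]
  linarith

theorem Convex.exists_lipschitzWith_one_retraction [CompleteSpace F] {K : Set F}
    (hK : Convex ℝ K) (hKc : IsClosed K) (hne : K.Nonempty) :
    ∃ π : F → F, LipschitzWith 1 π ∧
      ∀ z ∈ K, ∀ ν : F, (∀ y ∈ K, ⟪ν, y - z⟫_ℝ ≤ 0) → π (z + ν) = z := by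
  have hex : ∀ u : F, ∃ v ∈ K, ∀ y ∈ K, ⟪u - v, y - v⟫_ℝ ≤ 0 := fun u => by
    obtain ⟨v, hvK, hv⟩ := exists_norm_eq_iInf_of_complete_convex hne hKc.isComplete hK u
    exact ⟨v, hvK, (norm_eq_iInf_iff_real_inner_le_zero hK hvK).1 hv⟩
  choose π hπK hπ using hex
  refine ⟨π, LipschitzWith.of_dist_le_mul fun u u' => ?_, fun z hz ν hν => ?_⟩
  · have key := norm_sub_sq_le_inner_of_forall_inner_le_zero (hπK u) (hπK u') (hπ u) (hπ u')
    have hcs := real_inner_le_norm (u - u') (π u - π u')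
    rw [NNReal.coe_one, one_mul, dist_eq_norm, dist_eq_norm]
    nlinarith [norm_nonneg (π u - π u'), norm_nonneg (u - u')]
  · have hz' : ∀ y ∈ K, ⟪z + ν - z, y - z⟫_ℝ ≤ 0 := by simpa using hν
    have key := norm_sub_sq_le_inner_of_forall_inner_le_zero (hπK (z + ν)) hz (hπ _) hz'
    rw [sub_self, inner_zero_left] at key
    simpa [sub_eq_zero] using key

theorem exists_inner_le_zero_of_mem_frontier [CompleteSpace F] {Ω : Set F} (hΩ : IsOpen Ω)
    (hconv : Convex ℝ Ω) (hne : Ω.Nonempty) {z : F} (hz : z ∈ frontier Ω) :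
    ∃ ν ≠ 0, ∀ y ∈ closure Ω, ⟪ν, y - z⟫_ℝ ≤ 0 := by
  obtain ⟨f, hf⟩ := geometric_hahn_banach_open_point hconv hΩ
    (by rw [hΩ.frontier_eq] at hz; exact hz.2)
  obtain ⟨a, ha⟩ := hne
  refine ⟨(InnerProductSpace.toDual ℝ F).symm f, fun h0 => ?_, fun y hy => ?_⟩
  · have hf0 : f = 0 := (InnerProductSpace.toDual ℝ F).symm.map_eq_zero_iff.1 h0
    simpa [hf0] using hf a ha
  · have hle : closure Ω ⊆ {y | f y ≤ f z} :=
      closure_minimal (fun y hy => (hf y hy).le) (isClosed_le f.continuous continuous_const)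
    simpa [InnerProductSpace.toDual_symm_apply] using hle hy

end NearestPoint

theorem exists_nonneg_norm_add_smul_eq {W : Type*} [NormedAddCommGroup W] [NormedSpace ℝ W]
    {x w : W} (hw : w ≠ 0) {R : ℝ} (hx : ‖x‖ ≤ R) : ∃ t : ℝ, 0 ≤ t ∧ ‖x + t • w‖ = R := by
  have hw' : 0 < ‖w‖ := norm_pos_iff.2 hw
  set T := (R + ‖x‖) / ‖w‖
  have hT : 0 ≤ T := div_nonneg (by linarith [norm_nonneg x]) hw'.le
  have hRT : R ≤ ‖x + T • w‖ := by
    have := norm_sub_norm_le (T • w) (-x)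
    rw [norm_smul, Real.norm_of_nonneg hT, div_mul_cancel₀ _ hw'.ne', norm_neg,
      sub_neg_eq_add, add_comm (T • w)] at this
    linarith
  obtain ⟨t, ht, htR⟩ := intermediate_value_Icc hT (f := fun t : ℝ => ‖x + t • w‖)
    (by fun_prop) ⟨by simpa using hx, hRT⟩
  exact ⟨t, ht.1, htR⟩

theorem hausdorffMeasure_sphere_pi_lt_top (m : ℕ) (R : ℝ) :
    μH[m] (sphere (0 : Fin (m + 1) → ℝ) R) < ⊤ := by
  have hcover : sphere (0 : Fin (m + 1) → ℝ) R ⊆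
      ⋃ jc ∈ (univ ×ˢ {-R, R} : Set (Fin (m + 1) × ℝ)),
        jc.1.insertNth jc.2 '' closedBall (0 : Fin m → ℝ) R := by
    intro x hx
    rw [mem_sphere_zero_iff_norm] at hx
    obtain ⟨j, -, hj⟩ := Finset.exists_max_image Finset.univ (fun i => ‖x i‖) Finset.univ_nonempty
    have hxj : ‖x j‖ = R := le_antisymm (hx ▸ norm_le_pi_norm x j)
      (hx ▸ (pi_norm_le_iff_of_nonneg (norm_nonneg _)).2 fun i => hj i (Finset.mem_univ i))
    refine mem_biUnion (x := (j, x j)) ⟨mem_univ j, ?_⟩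
      ⟨j.removeNth x, ?_, Fin.insertNth_self_removeNth j x⟩
    · rcases abs_eq (hxj ▸ norm_nonneg _) |>.1 (by simpa using hxj) with h | h <;> simp [h]
    · rw [mem_closedBall_zero_iff, ← hx]
      exact (pi_norm_le_iff_of_nonneg (norm_nonneg _)).2 fun i => norm_le_pi_norm x _
  refine (measure_mono hcover).trans_lt <|
    measure_biUnion_lt_top (finite_univ.prod (toFinite _)) fun jc _ => ?_
  have hiso : Isometry (Fin.insertNth (α := fun _ => ℝ) jc.1 jc.2) :=
    Isometry.of_dist_eq fun f g => by simp [Fin.dist_insertNth_insertNth]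
  have hvol := hausdorffMeasure_pi_real (ι := Fin m)
  rw [Fintype.card_fin] at hvol
  rw [hiso.hausdorffMeasure_image (Or.inl m.cast_nonneg), hvol]
  exact measure_closedBall_lt_top

theorem hausdorffMeasure_frontier_lt_top {m : ℕ} {Ω : Set (EuclideanSpace ℝ (Fin (m + 1)))}
    (hΩ : IsOpen Ω) (hconv : Convex ℝ Ω) (hne : Ω.Nonempty) (hbdd : IsBounded Ω) :
    μH[m] (frontier Ω) < ⊤ := by
  obtain ⟨π, hπ, hπν⟩ :=
    hconv.closure.exists_lipschitzWith_one_retraction isClosed_closure hne.closure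
  obtain ⟨R, hR⟩ := isBounded_iff_forall_norm_le.1
    ((PiLp.lipschitzWith_ofLp 2 _).isBounded_image hbdd.closure)
  have hcover : frontier Ω ⊆ (π ∘ WithLp.toLp 2) '' sphere 0 R := by
    intro z hz
    obtain ⟨ν, hν0, hν⟩ := exists_inner_le_zero_of_mem_frontier hΩ hconv hne hz
    obtain ⟨t, ht, htR⟩ := exists_nonneg_norm_add_smul_eq (x := WithLp.ofLp z)
      (w := WithLp.ofLp ν) (by simpa using hν0) (hR _ ⟨z, frontier_subset_closure hz, rfl⟩)
    refine ⟨_, mem_sphere_zero_iff_norm.2 htR, hπν z (frontier_subset_closure hz) (t • ν)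
      fun y hy => ?_⟩
    rw [inner_smul_left]
    exact mul_nonpos_of_nonneg_of_nonpos ht (hν y hy)
  calc μH[m] (frontier Ω) ≤ μH[m] ((π ∘ WithLp.toLp 2) '' sphere 0 R) := measure_mono hcover
    _ ≤ _ := (hπ.comp (PiLp.lipschitzWith_toLp 2 _)).hausdorffMeasure_image_le m.cast_nonneg _
    _ < ⊤ := ENNReal.mul_lt_top (by simp) (hausdorffMeasure_sphere_pi_lt_top m R)

theorem volume_unitBall_fin_add_two (n : ℕ) :
    (volume (ball (0 : EuclideanSpace ℝ (Fin (n + 2))) 1)).toReal =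
      2 * Real.pi / (n + 2) * (volume (ball (0 : EuclideanSpace ℝ (Fin n)) 1)).toReal := by
  rcases n with _ | n
  · have hball : ball (0 : EuclideanSpace ℝ (Fin 0)) 1 = univ := by
      ext x
      simp [Subsingleton.elim x 0]
    rw [hball, ← (PiLp.volume_preserving_toLp (Fin 0)).measure_preimage
      MeasurableSet.univ.nullMeasurableSet]
    simp [volume_pi, Real.pi_nonneg]
  · simp only [EuclideanSpace.volume_ball, Fintype.card_fin, ENNReal.ofReal_one, one_pow, one_mul]
    rw [ENNReal.toReal_ofReal (by positivity), ENNReal.toReal_ofReal (by positivity)]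
    push_cast
    rw [show ((n : ℝ) + 1 + 2) / 2 + 1 = ((n : ℝ) + 1) / 2 + 1 + 1 by ring,
      Real.Gamma_add_one (by positivity), pow_add, Real.sq_sqrt Real.pi_pos.le]
    field_simp

theorem exists_pi_le_mul_one_sub_pow (n : ℕ) :
    ∃ s : ℝ, 0 ≤ s ∧ s < 1 ∧ Real.pi ≤ s * (1 - s) ^ n * (n + 2) ^ (n + 2) := by
  rcases n with _ | m
  · refine ⟨4 / 5, by norm_num, by norm_num, ?_⟩
    nlinarith [Real.pi_lt_d2]
  · refine ⟨1 / 2, by norm_num, by norm_num, ?_⟩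
    have hs : (1 / 2 : ℝ) * (1 - 1 / 2) ^ (m + 1) = (2 ^ (m + 2))⁻¹ := by
      rw [← inv_pow]; norm_num [pow_succ]; ring
    rw [hs, inv_mul_eq_div, le_div_iff₀ (by positivity)]
    push_cast
    calc Real.pi * 2 ^ (m + 2) ≤ 4 * 2 ^ (m + 2) := by gcongr; exact Real.pi_le_four
      _ = 16 * 2 ^ m := by ring
      _ ≤ 27 * 3 ^ m := by gcongr <;> norm_num
      _ = 3 ^ (m + 1 + 2) := by ring
      _ ≤ ((m : ℝ) + 1 + 2) ^ (m + 1 + 2) := by gcongr; linarith [m.cast_nonneg (α := ℝ)]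

theorem exists_volume_unitBall_le (n : ℕ) :
    ∃ s : ℝ, 0 ≤ s ∧ s < 1 ∧
      (volume (ball (0 : EuclideanSpace ℝ (Fin (n + 2))) 1)).toReal / (2 * (n + 2) ^ (n + 1)) ≤
        s * (1 - s) ^ n * (volume (ball (0 : EuclideanSpace ℝ (Fin n)) 1)).toReal := by
  obtain ⟨s, hs0, hs1, hπ⟩ := exists_pi_le_mul_one_sub_pow n
  refine ⟨s, hs0, hs1, ?_⟩
  set ω := (volume (ball (0 : EuclideanSpace ℝ (Fin n)) 1)).toReal
  rw [volume_unitBall_fin_add_two, div_le_iff₀ (by positivity)]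
  calc 2 * Real.pi / (n + 2) * ω = Real.pi * ω * (2 / (n + 2)) := by ring
    _ ≤ s * (1 - s) ^ n * (n + 2) ^ (n + 2) * ω * (2 / (n + 2)) := by gcongr
    _ = s * (1 - s) ^ n * ω * (2 * (n + 2) ^ (n + 1)) := by field_simp; ring

theorem apply_inradius_le_of_forall_ball_subset {d : ℕ} [NeZero d]
    {Ω : Set (EuclideanSpace ℝ (Fin d))} (hΩ : IsOpen Ω) (hne : Ω.Nonempty) (hbdd : IsBounded Ω)
    {g : ℝ → ℝ} (hg : Continuous g) {P : ℝ} (h : ∀ x r, 0 < r → ball x r ⊆ Ω → g r ≤ P) :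
    g (inradius d Ω) ≤ P := by
  set S := {r : ℝ | ∃ x, ball x r ⊆ Ω}
  obtain ⟨x, hx⟩ := hne
  obtain ⟨ε, hε, hxε⟩ := Metric.isOpen_iff.1 hΩ x hx
  have hS : BddAbove S := ⟨diam Ω, fun r ⟨y, hy⟩ => by
    rcases le_or_gt r 0 with hr | hr
    · exact hr.trans diam_nonneg
    · have := diam_mono hy hbdd
      rw [diam_ball_eq y hr.le] at this
      linarith⟩
  have hpos : 0 < sSup S := hε.trans_le (le_csSup hS ⟨x, hxε⟩)
  change g (sSup S) ≤ P
  refine le_of_tendsto (hg.continuousWithinAt (s := Iio (sSup S))).tendsto ?_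
  filter_upwards [Ioo_mem_nhdsLT hpos] with r ⟨hr, hrρ⟩
  obtain ⟨r', ⟨y, hy⟩, hrr'⟩ := exists_lt_of_lt_csSup (s := S) ⟨ε, x, hxε⟩ hrρ
  exact h y r hr ((ball_subset_ball hrr'.le).trans hy)

theorem mul_diam_le_of_forall_mul_dist_le {α : Type*} [PseudoMetricSpace α] {s : Set α}
    {K P : ℝ} (hK : 0 ≤ K) (hP : 0 ≤ P) (h : ∀ x ∈ s, ∀ y ∈ s, K * dist x y ≤ P) :
    K * diam s ≤ P := by
  rcases hK.eq_or_lt with rfl | hK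
  · simpa using hP
  rw [← le_div_iff₀' hK]
  exact diam_le_of_forall_dist_le (div_nonneg hP hK.le) fun x hx y hy =>
    (le_div_iff₀' hK).2 (h x hx y hy)

theorem mul_diam_mul_pow_le_perim {n : ℕ} {Ω : Set (EuclideanSpace ℝ (Fin (n + 2)))}
    (hΩ : IsOpen Ω) (hconv : Convex ℝ Ω) (hne : Ω.Nonempty) (hbdd : IsBounded Ω)
    {x : EuclideanSpace ℝ (Fin (n + 2))} {r : ℝ} (hr : 0 < r) (hx : ball x r ⊆ Ω) {s : ℝ}
    (hs0 : 0 ≤ s) (hs1 : s < 1) :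
    s * (1 - s) ^ n * (volume (ball (0 : EuclideanSpace ℝ (Fin n)) 1)).toReal * diam Ω * r ^ n
      ≤ perim (n + 2) Ω := by
  have hs : 0 ≤ 1 - s := by linarith
  have hperim : perim (n + 2) Ω = (μH[(n + 1 : ℕ)] (frontier Ω)).toReal := by
    rw [perim]
    push_cast
    ring_nf
  rw [mul_right_comm, hperim]
  refine mul_diam_le_of_forall_mul_dist_le (by positivity) ENNReal.toReal_nonneg
    fun p hp q hq => ?_
  calc _ = (ENNReal.ofReal (s * dist p q * ((1 - s) * r) ^ n) *
        volume (ball (0 : EuclideanSpace ℝ (Fin n)) 1)).toReal := by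
        rw [ENNReal.toReal_mul, ENNReal.toReal_ofReal (by positivity), mul_pow]
        ring
    _ ≤ _ := ENNReal.toReal_mono (hausdorffMeasure_frontier_lt_top hΩ hconv hne hbdd).ne
        (ofReal_le_hausdorffMeasure_frontier hbdd hconv hr hx hp hq hs0 hs1)

theorem perim_ge_diam_inradius (d : ℕ) (hd : 2 ≤ d)
    (Ω : Set (EuclideanSpace ℝ (Fin d))) (hne : Ω.Nonempty) (hΩ : IsOpen Ω)
    (hbdd : IsBounded Ω) (hconv : Convex ℝ Ω) :
    perim d Ω ≥
      ((volume (ball (0 : EuclideanSpace ℝ (Fin d)) 1)).toReal /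
          (2 * (d : ℝ) ^ ((d : ℝ) - 1))) *
        diam Ω * inradius d Ω ^ ((d : ℝ) - 2) := by
  obtain ⟨n, rfl⟩ : ∃ n, d = n + 2 := ⟨d - 2, by omega⟩
  obtain ⟨s, hs0, hs1, hconst⟩ := exists_volume_unitBall_le n
  rw [ge_iff_le, show ((n + 2 : ℕ) : ℝ) - 1 = (n + 1 : ℕ) by push_cast; ring,
    show ((n + 2 : ℕ) : ℝ) - 2 = (n : ℕ) by push_cast; ring, Real.rpow_natCast, Real.rpow_natCast]
  push_cast
  refine apply_inradius_le_of_forall_ball_subset (g := fun r => _ * diam Ω * r ^ n) hΩ hne hbdd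
    (by fun_prop) fun x r hr hx => ?_
  calc _ ≤ _ := by gcongr
    _ ≤ perim (n + 2) Ω := mul_diam_mul_pow_le_perim hΩ hconv hne hbdd hr hx hs0 hs1
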